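/- arXiv:1604.06347 — 4 statements merged into one kernel-verified Lean document; each statement's English description precedes it below -/
import Mathlib

section
/- Let P_1,...,P_r be distinct points in ℙ^n, P = (1:0:...:0), J = ℘_1^{m_1} ∩ ... ∩ ℘_r^{m_r}, ℘ = (X_1,...,X_n), and a a positive integer. Suppose for each i = 0,...,a-1 and each monomial M of degree i in X_1,...,X_n there exist hyperplanes L_1,...,L_t avoiding P with L_1⋯L_t·M ∈ J. If δ = max{t+i : 0 ≤ i ≤ a-1} (with t the number of hyperplanes used for degree i), then reg(R/(J+℘^a)) ≤ δ. -/
open MvPolynomial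

noncomputable section

variable (K : Type*) [Field K] [IsAlgClosed K]

/-- The defining homogeneous prime ideal of a point of projective n-space. -/
def pointIdeal {n : ℕ} (P : Projectivization K (Fin (n+1) → K)) :
    Ideal (MvPolynomial (Fin (n+1)) K) :=
  Ideal.span {f | f.IsHomogeneous 1 ∧ eval P.rep f = 0}

/-- The Hilbert function of R/I. -/
def hilbertFn {n : ℕ} (I : Ideal (MvPolynomial (Fin (n+1)) K)) (t : ℕ) : ℕ :=
  Module.finrank K ((homogeneousSubmodule (Fin (n+1)) K t).map
    (Ideal.Quotient.mkₐ K I).toLinearMap)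

/-- The regularity index of R/I. -/
def regIndex {n : ℕ} (I : Ideal (MvPolynomial (Fin (n+1)) K)) : ℕ :=
  sInf {t | ∀ s, t ≤ s → hilbertFn K I s = hilbertFn K I t}

/-- T_j of the Segre bound. -/
def segreT {n s : ℕ} (P : Fin s → Projectivization K (Fin (n+1) → K)) (m j : ℕ) : ℕ :=
  sSup {v | ∃ S : Finset (Fin s), (∃ W : Submodule K (Fin (n+1) → K),
    Module.finrank K W = j + 1 ∧ ∀ i ∈ S, (P i).rep ∈ W) ∧ v = (m * S.card + j - 2) / j}

namespace Stmt2Aux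

variable {K : Type*} [Field K] {n : ℕ}

/-- The irrelevant-for-P ideal ℘ = (X_1, ..., X_n). -/
def pI (n : ℕ) (K : Type*) [Field K] : Ideal (MvPolynomial (Fin (n+1)) K) :=
  Ideal.span {f | ∃ i : Fin (n+1), i ≠ 0 ∧ f = X i}

/-- The ℘-degree of an exponent vector. -/
def pdeg {n : ℕ} (d : Fin (n+1) →₀ ℕ) : ℕ := ∑ k ∈ Finset.univ.erase 0, d k

lemma pdeg_add (d e : Fin (n+1) →₀ ℕ) : pdeg (d + e) = pdeg d + pdeg e := by
  simp [pdeg, Finset.sum_add_distrib]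

lemma sum_eq_apply_add_pdeg (d : Fin (n+1) →₀ ℕ) : (∑ k, d k) = d 0 + pdeg d :=
  (Finset.add_sum_erase Finset.univ d (Finset.mem_univ 0)).symm

lemma pdeg_mono {d e : Fin (n+1) →₀ ℕ} (h : d ≤ e) : pdeg d ≤ pdeg e :=
  Finset.sum_le_sum fun k _ => Finsupp.le_def.mp h k

lemma degree_eq_sum_univ (d : Fin (n+1) →₀ ℕ) : d.degree = ∑ k, d k :=
  Finset.sum_subset (Finset.subset_univ _) (fun k _ hk => Finsupp.notMem_support_iff.mp hk)

lemma pI_eq_span_X_image : pI n K = Ideal.span (X '' {i : Fin (n+1) | i ≠ 0}) := by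
  unfold pI
  congr 1
  ext f
  constructor
  · rintro ⟨i, hi, rfl⟩; exact ⟨i, hi, rfl⟩
  · rintro ⟨i, hi, rfl⟩; exact ⟨i, hi, rfl⟩

lemma monomial_mem_pow (d : Fin (n+1) →₀ ℕ) :
    monomial d (1 : K) ∈ (pI n K) ^ (pdeg d) := by
  induction d using Finsupp.induction with
  | zero => simp [pdeg]
  | single_add k b f hk hb ih =>
    have hmul : monomial (Finsupp.single k b + f) (1 : K)
        = X k ^ b * monomial f 1 := by
      rw [X_pow_eq_monomial, monomial_mul, one_mul]
    have hpd : pdeg (Finsupp.single k b + f) = pdeg (Finsupp.single k b) + pdeg f :=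
      pdeg_add _ _
    by_cases hk0 : k = 0
    · have hz : pdeg (Finsupp.single k b : Fin (n+1) →₀ ℕ) = 0 := by
        subst hk0
        refine Finset.sum_eq_zero fun j hj => ?_
        exact Finsupp.single_eq_of_ne' (Ne.symm (Finset.ne_of_mem_erase hj))
      rw [hmul, hpd, hz, zero_add]
      exact Ideal.mul_mem_left _ _ ih
    · have hps : pdeg (Finsupp.single k b : Fin (n+1) →₀ ℕ) = b := by
        have h1 : ∑ j ∈ Finset.univ.erase 0, (Finsupp.single k b : Fin (n+1) →₀ ℕ) j
            = (Finsupp.single k b : Fin (n+1) →₀ ℕ) k :=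
          Finset.sum_eq_single_of_mem k
            (Finset.mem_erase.mpr ⟨hk0, Finset.mem_univ k⟩)
            (fun j _ hj => Finsupp.single_eq_of_ne' (Ne.symm hj))
        rw [pdeg, h1, Finsupp.single_eq_same]
      rw [hmul, hpd, hps, pow_add]
      refine Ideal.mul_mem_mul ?_ ih
      refine Ideal.pow_mem_pow ?_ b
      unfold pI
      exact Ideal.subset_span ⟨k, hk0, rfl⟩

lemma monomial_mem_pow_of_le {j : ℕ} (d : Fin (n+1) →₀ ℕ) (c : K) (h : j ≤ pdeg d) :
    monomial d c ∈ (pI n K) ^ j := by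
  have h1 : monomial d c = C c * monomial d 1 := by rw [C_mul_monomial, mul_one]
  rw [h1]
  exact Ideal.mul_mem_left _ _ (Ideal.pow_le_pow_right h (monomial_mem_pow d))

lemma pow_le_span_monomial (j : ℕ) :
    (pI n K) ^ j ≤ Ideal.span ((fun d => monomial d (1 : K)) ''
      {d : Fin (n+1) →₀ ℕ | j ≤ pdeg d}) := by
  induction j with
  | zero =>
    intro x _
    have h1 : (1 : MvPolynomial (Fin (n+1)) K) ∈ Ideal.span ((fun d => monomial d (1 : K)) ''
        {d : Fin (n+1) →₀ ℕ | 0 ≤ pdeg d}) := by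
      refine Ideal.subset_span ⟨0, by simp, ?_⟩
      simp [monomial_zero']
    have := Ideal.eq_top_of_unit_mem _ _ 1 h1 (by simp)
    rw [this]; trivial
  | succ j ih =>
    have h1 : (pI n K) ^ (j+1) = pI n K * (pI n K) ^ j := by rw [pow_succ']
    rw [h1]
    refine le_trans (Ideal.mul_mono_right ih) ?_
    unfold pI
    rw [Ideal.span_mul_span']
    refine Ideal.span_le.mpr ?_
    rintro x ⟨g, hg, m, hm, rfl⟩
    obtain ⟨i, hi, rfl⟩ := hg
    obtain ⟨d, hd, rfl⟩ := hm
    show X i * monomial d (1 : K) ∈ _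
    have hx : X i * monomial d (1 : K) = monomial (Finsupp.single i 1 + d) 1 := by
      rw [show (X i : MvPolynomial (Fin (n+1)) K) = X i ^ 1 by rw [pow_one],
        X_pow_eq_monomial, monomial_mul, one_mul]
    rw [hx]
    refine Ideal.subset_span ⟨Finsupp.single i 1 + d, ?_, rfl⟩
    have hps : pdeg (Finsupp.single i 1 : Fin (n+1) →₀ ℕ) = 1 := by
      have h2 : ∑ j' ∈ Finset.univ.erase 0, (Finsupp.single i 1 : Fin (n+1) →₀ ℕ) j'
          = (Finsupp.single i 1 : Fin (n+1) →₀ ℕ) i :=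
        Finset.sum_eq_single_of_mem i
          (Finset.mem_erase.mpr ⟨hi, Finset.mem_univ i⟩)
          (fun j' _ hj' => Finsupp.single_eq_of_ne' (Ne.symm hj'))
      rw [pdeg, h2, Finsupp.single_eq_same]
    have : pdeg (Finsupp.single i 1 + d) = 1 + pdeg d := by rw [pdeg_add, hps]
    have hd' : j ≤ pdeg d := hd
    simp only [Set.mem_setOf_eq, this]
    omega

lemma pdeg_ge_of_mem_pow {j : ℕ} {f : MvPolynomial (Fin (n+1)) K}
    (hf : f ∈ (pI n K) ^ j) : ∀ m ∈ f.support, j ≤ pdeg m := by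
  intro m hm
  have := pow_le_span_monomial (K := K) (n := n) j hf
  rw [mem_ideal_span_monomial_image] at this
  obtain ⟨d, hd, hdm⟩ := this m hm
  exact le_trans hd (pdeg_mono hdm)

lemma exists_single_of_degree_one {d : Fin (n+1) →₀ ℕ} (h : d.degree = 1) :
    ∃ j, d = Finsupp.single j 1 := by
  have hne : d.support.Nonempty := by
    by_contra hcon
    rw [Finset.not_nonempty_iff_eq_empty] at hcon
    have : d = 0 := Finsupp.support_eq_empty.mp hcon
    simp [this, Finsupp.degree] at h
  obtain ⟨j, hj⟩ := hne
  refine ⟨j, ?_⟩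
  ext k
  rcases eq_or_ne k j with rfl | hkj
  · have h1 : 1 ≤ d k := Nat.one_le_iff_ne_zero.mpr (Finsupp.mem_support_iff.mp hj)
    have h2 : d k ≤ d.degree := Finsupp.le_degree k d
    simp only [Finsupp.single_eq_same]
    omega
  · rw [Finsupp.single_eq_of_ne' (Ne.symm hkj)]
    by_contra hdk
    have hk : k ∈ d.support := Finsupp.mem_support_iff.mpr hdk
    have hsub : {j, k} ⊆ d.support := by
      intro x hx
      simp only [Finset.mem_insert, Finset.mem_singleton] at hx
      rcases hx with rfl | rfl
      · exact hj
      · exact hk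
    have hsum : d j + d k ≤ d.degree := by
      rw [Finsupp.degree]
      calc d j + d k = ∑ x ∈ {j, k}, d x := (Finset.sum_pair (Ne.symm hkj)).symm
        _ ≤ ∑ x ∈ d.support, d x := Finset.sum_le_sum_of_subset hsub
    have h1 : 1 ≤ d j := Nat.one_le_iff_ne_zero.mpr (Finsupp.mem_support_iff.mp hj)
    omega

/-- A linear form minus its X_0-part lies in ℘. -/
lemma sub_C_coeff_mul_X_mem {L : MvPolynomial (Fin (n+1)) K} (hL : L.IsHomogeneous 1) :
    L - C (coeff (Finsupp.single 0 1) L) * X 0 ∈ pI n K := by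
  rw [pI_eq_span_X_image, mem_ideal_span_X_image]
  intro m hm
  have hcm : coeff m (L - C (coeff (Finsupp.single 0 1) L) * X 0) ≠ 0 :=
    mem_support_iff.mp hm
  have hm0 : m ≠ Finsupp.single 0 1 := by
    rintro rfl
    apply hcm
    simp [coeff_sub, coeff_C_mul, coeff_X']
  have hmL : m ∈ L.support := by
    rw [mem_support_iff]
    intro hz
    apply hcm
    rw [coeff_sub, hz, coeff_C_mul, coeff_X', if_neg (fun h => hm0 h.symm)]
    simp
  have hdeg : m.degree = 1 := by
    have := hL (mem_support_iff.mp hmL)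
    rwa [Pi.one_def, ← Finsupp.degree_eq_weight_one] at this
  obtain ⟨j, rfl⟩ := exists_single_of_degree_one hdeg
  have hj0 : j ≠ 0 := by
    rintro rfl
    exact hm0 rfl
  exact ⟨j, hj0, by simp⟩

lemma prod_sub_C_prod_mem {ι : Type*} (s : Finset ι)
    (L : ι → MvPolynomial (Fin (n+1)) K) (c : ι → K)
    (h : ∀ k ∈ s, L k - C (c k) * X 0 ∈ pI n K) :
    (∏ k ∈ s, L k) - C (∏ k ∈ s, c k) * X 0 ^ s.card ∈ pI n K := by
  classical
  induction s using Finset.induction_on with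
  | empty => simp
  | @insert x s' hx ih =>
    rw [Finset.prod_insert hx, Finset.prod_insert hx, Finset.card_insert_of_notMem hx]
    have h1 := h x (Finset.mem_insert_self x s')
    have h2 := ih (fun k hk => h k (Finset.mem_insert_of_mem hk))
    have key : L x * (∏ k ∈ s', L k) - C (c x * ∏ k ∈ s', c k) * X 0 ^ (s'.card + 1)
        = L x * ((∏ k ∈ s', L k) - C (∏ k ∈ s', c k) * X 0 ^ s'.card)
          + (L x - C (c x) * X 0) * (C (∏ k ∈ s', c k) * X 0 ^ s'.card) := by
      rw [C_mul]; ring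
    rw [key]
    exact Ideal.add_mem _ (Ideal.mul_mem_left _ _ h2) (Ideal.mul_mem_right _ _ h1)

end Stmt2Aux

/-- Remark 2.3: hyperplanes avoiding P give an upper bound for reg(R/(J+℘^a)). -/
theorem stmt2 {n r : ℕ} (P : Fin r → Projectivization K (Fin (n+1) → K))
    (m : Fin r → ℕ) (hm : ∀ i, 1 ≤ m i) (a δ : ℕ) (ha : 1 ≤ a)
    (J : Ideal (MvPolynomial (Fin (n+1)) K))
    (hJ : J = ⨅ i, (pointIdeal K (P i)) ^ (m i))
    (e₀ : Fin (n+1) → K) (he₀ : e₀ = fun j => if j = 0 then 1 else 0)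
    (hL : ∀ i < a, ∀ d : Fin (n+1) →₀ ℕ, d 0 = 0 → (∑ k, d k) = i →
      ∃ t : ℕ, t + i ≤ δ ∧ ∃ L : Fin t → MvPolynomial (Fin (n+1)) K,
        (∀ k, (L k).IsHomogeneous 1 ∧ eval e₀ (L k) ≠ 0) ∧
        (∏ k, L k) * monomial d 1 ∈ J) :
    regIndex K (J + (Ideal.span {f | ∃ i : Fin (n+1), i ≠ 0 ∧ f = X i}) ^ a) ≤ δ := by
  classical
  set Pid : Ideal (MvPolynomial (Fin (n+1)) K) :=
    Ideal.span {f | ∃ i : Fin (n+1), i ≠ 0 ∧ f = X i} with hPid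
  have hpI : Stmt2Aux.pI n K = Pid := rfl
  set I : Ideal (MvPolynomial (Fin (n+1)) K) := J + Pid ^ a with hI
  have hJle : J ≤ I := by rw [hI, Ideal.add_eq_sup]; exact le_sup_left
  have hPle : Pid ^ a ≤ I := by rw [hI, Ideal.add_eq_sup]; exact le_sup_right
  have hker : ∀ f ∈ Pid, eval e₀ f = 0 := by
    have hle : Pid ≤ RingHom.ker (eval e₀ : MvPolynomial (Fin (n+1)) K →+* K) := by
      rw [hPid]
      refine Ideal.span_le.mpr ?_
      rintro _ ⟨i, hi, rfl⟩
      rw [SetLike.mem_coe, RingHom.mem_ker, eval_X, he₀]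
      simp [hi]
    exact fun f hf => hle hf
  have key : ∀ b : ℕ, ∀ d : Fin (n+1) →₀ ℕ, a ≤ Stmt2Aux.pdeg d + b → δ ≤ ∑ k, d k →
      (monomial d 1 : MvPolynomial (Fin (n+1)) K) ∈ I := by
    intro b
    induction b with
    | zero =>
      intro d hd _
      refine hPle ?_
      rw [← hpI]
      exact Stmt2Aux.monomial_mem_pow_of_le d 1 (by omega)
    | succ b ih =>
      intro d hd hsum
      by_cases hcase : a ≤ Stmt2Aux.pdeg d + b
      · exact ih d hcase hsum
      · set i := Stmt2Aux.pdeg d with hidef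
        have hia : a = i + b + 1 := by omega
        set d' := Finsupp.erase 0 d with hd'def
        have hd'0 : d' 0 = 0 := Finsupp.erase_same
        have hpd' : Stmt2Aux.pdeg d' = i := by
          rw [hidef]
          unfold Stmt2Aux.pdeg
          refine Finset.sum_congr rfl fun k hk => ?_
          exact Finsupp.erase_ne (Finset.ne_of_mem_erase hk)
        have hd'sum : (∑ k, d' k) = i := by
          rw [Stmt2Aux.sum_eq_apply_add_pdeg d', hd'0, zero_add, hpd']
        obtain ⟨t, htδ, L, hLk, hJm⟩ := hL i (by omega) d' hd'0 hd'sum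
        set c : Fin t → K := fun k => coeff (Finsupp.single 0 1) (L k) with hc
        have hck : ∀ k, L k - C (c k) * X 0 ∈ Pid := by
          intro k
          rw [← hpI]
          exact Stmt2Aux.sub_C_coeff_mul_X_mem (hLk k).1
        have hcne : ∀ k, c k ≠ 0 := by
          intro k hk0
          apply (hLk k).2
          have h1 : L k ∈ Pid := by
            have h2 := hck k
            rw [hk0] at h2
            simpa using h2
          exact hker _ h1
        set cc := ∏ k, c k with hcc
        have hccne : cc ≠ 0 := Finset.prod_ne_zero_iff.mpr (fun k _ => hcne k)
        have hs : (∑ k, d k) = d 0 + i := Stmt2Aux.sum_eq_apply_add_pdeg d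
        have htd0 : t ≤ d 0 := by omega
        have hE : (∏ k, L k) - C cc * X 0 ^ t ∈ Pid := by
          have h3 := Stmt2Aux.prod_sub_C_prod_mem Finset.univ L c (fun k _ => hck k)
          rw [Finset.card_univ, Fintype.card_fin] at h3
          rw [← hpI]
          exact h3
        set E := (∏ k, L k) - C cc * X 0 ^ t with hEdef
        have hM' : (monomial d' 1 : MvPolynomial (Fin (n+1)) K) ∈ Pid ^ i := by
          rw [← hpI]
          exact Stmt2Aux.monomial_mem_pow_of_le d' 1 (by omega)
        have hg : X 0 ^ (d 0 - t) * (E * monomial d' 1) ∈ Pid ^ (i+1) := by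
          refine Ideal.mul_mem_left _ _ ?_
          have h4 := Ideal.mul_mem_mul hE hM'
          rwa [← pow_succ'] at h4
        have hLt : IsHomogeneous (∏ k, L k) t := by
          have h5 := IsHomogeneous.prod Finset.univ L (fun _ => 1) (fun k _ => (hLk k).1)
          simpa using h5
        have hEhom : E.IsHomogeneous t := hLt.sub (isHomogeneous_C_mul_X_pow cc 0 t)
        have hM'hom : (monomial d' 1 : MvPolynomial (Fin (n+1)) K).IsHomogeneous i :=
          isHomogeneous_monomial 1 (by rw [Stmt2Aux.degree_eq_sum_univ]; exact hd'sum)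
        have hghom : (X 0 ^ (d 0 - t) * (E * monomial d' 1) :
            MvPolynomial (Fin (n+1)) K).IsHomogeneous (∑ k, d k) := by
          have h6 := (isHomogeneous_X_pow (R := K) (0 : Fin (n+1)) (d 0 - t)).mul
            (hEhom.mul hM'hom)
          have harith : (d 0 - t) + (t + i) = ∑ k, d k := by omega
          rwa [harith] at h6
        set g := X 0 ^ (d 0 - t) * (E * monomial d' 1) with hgdef
        have hgI : g ∈ I := by
          rw [← support_sum_monomial_coeff g]
          refine Ideal.sum_mem _ fun m hm => ?_
          have hpm : i + 1 ≤ Stmt2Aux.pdeg m := by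
            refine Stmt2Aux.pdeg_ge_of_mem_pow ?_ m hm
            rw [hpI]
            exact hg
          have hmsum : (∑ k, m k) = ∑ k, d k := by
            have h7 := hghom (mem_support_iff.mp hm)
            rwa [Pi.one_def, ← Finsupp.degree_eq_weight_one, Stmt2Aux.degree_eq_sum_univ] at h7
          have h8 : (monomial m (coeff m g) : MvPolynomial (Fin (n+1)) K)
              = C (coeff m g) * monomial m 1 := by rw [C_mul_monomial, mul_one]
          rw [h8]
          exact Ideal.mul_mem_left _ _ (ih m (by omega) (by omega))
        have hsplit : (monomial d 1 : MvPolynomial (Fin (n+1)) K)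
            = X 0 ^ (d 0) * monomial d' 1 := by
          rw [X_pow_eq_monomial, monomial_mul, one_mul, hd'def, Finsupp.single_add_erase]
        have hX : (X 0 : MvPolynomial (Fin (n+1)) K) ^ (d 0 - t) * X 0 ^ t = X 0 ^ (d 0) := by
          rw [← pow_add]
          congr 1
          omega
        have hid : C cc * monomial d 1
            = X 0 ^ (d 0 - t) * ((∏ k, L k) * monomial d' 1) - g := by
          rw [hsplit, hgdef, hEdef, ← hX]
          ring
        have hmem : C cc * monomial d 1 ∈ I := by
          rw [hid]
          exact Ideal.sub_mem _ (Ideal.mul_mem_left _ _ (hJle hJm)) hgI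
        have hfin : (monomial d 1 : MvPolynomial (Fin (n+1)) K)
            = C cc⁻¹ * (C cc * monomial d 1) := by
          rw [← mul_assoc, ← C_mul, inv_mul_cancel₀ hccne, C_1, one_mul]
        rw [hfin]
        exact Ideal.mul_mem_left _ _ hmem
  have hhom : ∀ s, δ ≤ s → ∀ f : MvPolynomial (Fin (n+1)) K, f.IsHomogeneous s → f ∈ I := by
    intro s hs f hf
    rw [← support_sum_monomial_coeff f]
    refine Ideal.sum_mem _ fun m hm => ?_
    have hmsum : (∑ k, m k) = s := by
      have h7 := hf (mem_support_iff.mp hm)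
      rwa [Pi.one_def, ← Finsupp.degree_eq_weight_one, Stmt2Aux.degree_eq_sum_univ] at h7
    have h8 : (monomial m (coeff m f) : MvPolynomial (Fin (n+1)) K)
        = C (coeff m f) * monomial m 1 := by rw [C_mul_monomial, mul_one]
    rw [h8]
    exact Ideal.mul_mem_left _ _ (key a m (by omega) (by omega))
  have hzero : ∀ s, δ ≤ s → hilbertFn K I s = 0 := by
    intro s hs
    unfold hilbertFn
    have hmap : (homogeneousSubmodule (Fin (n+1)) K s).map
        (Ideal.Quotient.mkₐ K I).toLinearMap = ⊥ := by
      rw [eq_bot_iff]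
      intro x hx
      obtain ⟨y, hy, rfl⟩ := Submodule.mem_map.mp hx
      have hyI : y ∈ I := hhom s hs y ((mem_homogeneousSubmodule _ _).mp hy)
      simp only [Submodule.mem_bot]
      show (Ideal.Quotient.mkₐ K I) y = 0
      rw [Ideal.Quotient.mkₐ_eq_mk]
      exact Ideal.Quotient.eq_zero_iff_mem.mpr hyI
    rw [hmap]
    exact finrank_bot K _
  unfold regIndex
  refine Nat.sInf_le ?_
  show ∀ s, δ ≤ s → hilbertFn K I s = hilbertFn K I δ
  intro s hs
  rw [hzero s hs, hzero δ le_rfl]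
end
end

section
/- Let X = {P_1,...,P_{s+3}} be distinct points in ℙ^n, not all on a linear (s-1)-space, and suppose some hyperplane H contains s+2 of the points, say P_1,...,P_{s+2}, and avoids P_{s+3}. Let m be a positive integer, J = ℘_1^m ∩ ... ∩ ℘_{s+2}^m. Then reg(R/(J + ℘_{s+3}^m)) ≤ 2m - 1. -/
open MvPolynomial

noncomputable section

variable (K : Type*) [Field K] [IsAlgClosed K]

lemma aux_monomial_mem_pow {σ : Type*} (d : σ →₀ ℕ) (c : K) :
    monomial d c ∈ (Ideal.span (Set.range (X : σ → MvPolynomial σ K))) ^ d.degree := by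
  induction d using Finsupp.induction with
  | zero => simp [map_zero]
  | single_add a b f ha hb ih =>
      have hdeg : (Finsupp.single a b + f).degree = b + f.degree := by
        rw [Finsupp.degree_eq_weight_one]
        rw [map_add]
        congr 1
        simp [Finsupp.weight, Finsupp.linearCombination_single]
      have heq : monomial (Finsupp.single a b + f) c
          = (X a : MvPolynomial σ K) ^ b * monomial f c := by
        rw [X_pow_eq_monomial, monomial_mul, one_mul]
      rw [hdeg, heq, pow_add]
      exact Ideal.mul_mem_mul
        (Ideal.pow_mem_pow (Ideal.subset_span (Set.mem_range_self a)) b) ih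

lemma aux_homog_mem_pow {σ : Type*} {f : MvPolynomial σ K} {t : ℕ}
    (hf : f.IsHomogeneous t) :
    f ∈ (Ideal.span (Set.range (X : σ → MvPolynomial σ K))) ^ t := by
  rw [f.as_sum]
  refine Ideal.sum_mem _ fun d hd => ?_
  have hc : coeff d f ≠ 0 := mem_support_iff.mp hd
  have : d.degree = t := by
    by_contra h
    exact hc (hf.coeff_eq_zero h)
  rw [← this]
  exact aux_monomial_mem_pow K d _

lemma aux_add_pow_le {R : Type*} [CommRing R] (A B : Ideal R) (m : ℕ) :
    (A + B) ^ (2 * m - 1) ≤ A ^ m + B ^ m := by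
  rw [add_pow, Ideal.sum_eq_sup]
  apply Finset.sup_le
  intro i hi
  simp only [Finset.mem_range] at hi
  by_cases h : m ≤ i
  · exact Ideal.mul_le_left.trans (Ideal.mul_le_left.trans
      ((Ideal.pow_le_pow_right h).trans le_sup_left))
  · exact Ideal.mul_le_left.trans (Ideal.mul_le_right.trans
      ((Ideal.pow_le_pow_right (by omega)).trans le_sup_right))

/-- Case 1 of Proposition 3.3: a hyperplane through s+2 of the points avoiding the
last one gives reg(R/(J+℘^m)) ≤ 2m-1. -/
theorem stmt13 {n s : ℕ} (hsn : s ≤ n)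
    (P : Fin (s+3) → Projectivization K (Fin (n+1) → K)) (hP : Function.Injective P)
    (hns : ¬ ∃ W : Submodule K (Fin (n+1) → K), Module.finrank K W = s ∧
      ∀ i, (P i).rep ∈ W)
    (H : MvPolynomial (Fin (n+1)) K) (hH1 : H.IsHomogeneous 1)
    (hHin : ∀ i : Fin (s+3), (i : ℕ) < s + 2 → eval (P i).rep H = 0)
    (hHavoid : eval (P ⟨s+2, by omega⟩).rep H ≠ 0)
    (m : ℕ) (hm : 1 ≤ m)
    (J : Ideal (MvPolynomial (Fin (n+1)) K))
    (hJ : J = ⨅ i : {i : Fin (s+3) // (i : ℕ) < s + 2}, (pointIdeal K (P i)) ^ m) :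
    regIndex K (J + (pointIdeal K (P ⟨s+2, by omega⟩)) ^ m) ≤ 2 * m - 1 := by
  set p := P ⟨s+2, by omega⟩ with hp
  set ℘ : Ideal (MvPolynomial (Fin (n+1)) K) := pointIdeal K p with h℘
  set I : Ideal (MvPolynomial (Fin (n+1)) K) := J + ℘ ^ m with hI
  -- H^m ∈ J
  have hHJ : H ^ m ∈ J := by
    rw [hJ, Ideal.mem_iInf]
    intro i
    have hmem : H ∈ pointIdeal K (P i.1) := by
      apply Ideal.subset_span
      exact ⟨hH1, hHin i i.2⟩
    exact Ideal.pow_mem_pow hmem m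
  -- every variable lies in ℘ + span {H}
  have hvar : ∀ i : Fin (n+1), (X i : MvPolynomial (Fin (n+1)) K) ∈ ℘ + Ideal.span {H} := by
    intro i
    set c : K := p.rep i / eval p.rep H with hc
    have hg : (X i - C c * H : MvPolynomial (Fin (n+1)) K) ∈ ℘ := by
      apply Ideal.subset_span
      constructor
      · exact (isHomogeneous_X K i).sub (hH1.C_mul c)
      · simp only [map_sub, map_mul, eval_C, eval_X]
        rw [hc, div_mul_cancel₀ _ hHavoid, sub_self]
    have : (X i : MvPolynomial (Fin (n+1)) K) = (X i - C c * H) + C c * H := by ring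
    rw [this]
    exact Ideal.add_mem _ (Ideal.mem_sup_left hg)
      (Ideal.mem_sup_right (Ideal.mul_mem_left _ _ (Ideal.mem_span_singleton_self H)))
  have hm' : Ideal.span (Set.range (X : Fin (n+1) → MvPolynomial (Fin (n+1)) K))
      ≤ ℘ + Ideal.span {H} := by
    rw [Ideal.span_le]
    rintro _ ⟨i, rfl⟩
    exact hvar i
  -- for t ≥ 2m-1, homogeneous elements of degree t lie in I
  have hkey : ∀ t : ℕ, 2 * m - 1 ≤ t → ∀ f : MvPolynomial (Fin (n+1)) K,
      f.IsHomogeneous t → f ∈ I := by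
    intro t ht f hf
    have h1 : f ∈ (Ideal.span (Set.range (X : Fin (n+1) → MvPolynomial (Fin (n+1)) K))) ^ t :=
      aux_homog_mem_pow K hf
    have h2 : f ∈ (℘ + Ideal.span {H}) ^ (2 * m - 1) :=
      (Ideal.pow_right_mono hm' _) ((Ideal.pow_le_pow_right ht) h1)
    have h3 : f ∈ ℘ ^ m + Ideal.span {H} ^ m := aux_add_pow_le ℘ _ m h2
    have h4 : ℘ ^ m + Ideal.span {H} ^ m ≤ I := by
      apply sup_le
      · exact le_sup_right
      · rw [Ideal.span_singleton_pow, Ideal.span_le, Set.singleton_subset_iff]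
        exact Ideal.mem_sup_left hHJ
    exact h4 h3
  -- hence hilbertFn vanishes from degree 2m-1 on
  have hzero : ∀ t : ℕ, 2 * m - 1 ≤ t → hilbertFn K I t = 0 := by
    intro t ht
    have hbot : (homogeneousSubmodule (Fin (n+1)) K t).map
        (Ideal.Quotient.mkₐ K I).toLinearMap = ⊥ := by
      rw [Submodule.eq_bot_iff]
      rintro x ⟨f, hf, rfl⟩
      have : f ∈ I := hkey t ht f ((mem_homogeneousSubmodule _ _).mp hf)
      show (Ideal.Quotient.mkₐ K I).toLinearMap f = 0
      rw [AlgHom.toLinearMap_apply, Ideal.Quotient.mkₐ_eq_mk]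
      exact Ideal.Quotient.eq_zero_iff_mem.mpr this
    rw [hilbertFn, hbot, finrank_bot]
  -- conclude
  apply Nat.sInf_le
  intro t ht
  rw [hzero t ht, hzero (2*m-1) le_rfl]
end
end

section
/- Let X be a finite set of points in ℙ^n lying on a linear s-space γ such that X is not in general position on γ and no linear (s-1)-space contains |X|-1 points of X. Define k as the minimum h such that some linear h-space contains h+2 points of X. Then k ≤ s-1, and for every h with k ≤ h ≤ s-1, every linear h-space contains at most h+2 points of X. -/
open MvPolynomial

noncomputable section

variable (K : Type*) [Field K] [IsAlgClosed K]

private lemma aux_extend_top {K V : Type*} [Field K] [AddCommGroup V] [Module K V]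
    [FiniteDimensional K V] (m : ℕ) (U : Submodule K V)
    (hU : Module.finrank K U ≤ m) (hm : m ≤ Module.finrank K V) :
    ∃ W : Submodule K V, U ≤ W ∧ Module.finrank K W = m := by
  obtain ⟨d, hd⟩ := Nat.exists_eq_add_of_le hU
  induction d generalizing U with
  | zero => exact ⟨U, le_rfl, by omega⟩
  | succ d ih =>
    have hlt : Module.finrank K U < Module.finrank K V := by omega
    obtain ⟨x, hx⟩ := U.exists_of_finrank_lt hlt
    have hxU : x ∉ U := by simpa using hx 1 one_ne_zero
    have hx0 : x ≠ 0 := fun h => hxU (h ▸ U.zero_mem)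
    set U' := U ⊔ (K ∙ x) with hU'
    have hle : Module.finrank K U' ≤ Module.finrank K U + 1 := by
      calc Module.finrank K U' ≤ Module.finrank K U + Module.finrank K (K ∙ x) :=
            Submodule.finrank_add_le_finrank_add_finrank U (K ∙ x)
        _ = Module.finrank K U + 1 := by rw [finrank_span_singleton hx0]
    have hltU : U < U' := lt_of_le_of_ne le_sup_left (fun h => hxU
      (h ▸ Submodule.mem_sup_right (Submodule.mem_span_singleton_self x)))
    have hgt : Module.finrank K U < Module.finrank K U' :=
      Submodule.finrank_lt_finrank_of_lt hltU
    have heq : Module.finrank K U' = Module.finrank K U + 1 := by omega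
    obtain ⟨W, hW1, hW2⟩ := ih U' (by omega) (by omega)
    exact ⟨W, hltU.le.trans hW1, hW2⟩

private lemma aux_extend {K V : Type*} [Field K] [AddCommGroup V] [Module K V]
    [FiniteDimensional K V] (γ U : Submodule K V) (hUγ : U ≤ γ) (m : ℕ)
    (hU : Module.finrank K U ≤ m) (hm : m ≤ Module.finrank K γ) :
    ∃ W : Submodule K V, U ≤ W ∧ W ≤ γ ∧ Module.finrank K W = m := by
  have h1 : Module.finrank K (U.comap γ.subtype) = Module.finrank K U :=
    (Submodule.comapSubtypeEquivOfLe hUγ).finrank_eq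
  obtain ⟨W', hW'1, hW'2⟩ := aux_extend_top m (U.comap γ.subtype) (by omega)
    (by simpa using hm)
  refine ⟨W'.map γ.subtype, fun u hu => ?_, ?_, by simpa using hW'2⟩
  · exact ⟨⟨u, hUγ hu⟩, hW'1 hu, rfl⟩
  · rintro _ ⟨⟨v, hv⟩, _, rfl⟩; exact hv

/-- Case 2 of Proposition 3.3: properties of the minimal k with some linear k-space
containing k+2 of the points. -/
theorem stmt14 {n s : ℕ} (hs2 : 2 ≤ s) (hsn : s ≤ n)
    (P : Fin (s+3) → Projectivization K (Fin (n+1) → K)) (hP : Function.Injective P)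
    (γ : Submodule K (Fin (n+1) → K)) (hγ : Module.finrank K γ = s + 1)
    (hPγ : ∀ i, (P i).rep ∈ γ)
    (hngp : ¬ ∀ j < s, ∀ W : Submodule K (Fin (n+1) → K), Module.finrank K W = j + 1 →
      ∀ S : Finset (Fin (s+3)), (∀ i ∈ S, (P i).rep ∈ W) → S.card ≤ j + 1)
    (h1 : ∀ W : Submodule K (Fin (n+1) → K), Module.finrank K W = s →
      ∀ S : Finset (Fin (s+3)), (∀ i ∈ S, (P i).rep ∈ W) → S.card ≤ s + 1)
    (k : ℕ)
    (hk : k = sInf {h | ∃ W : Submodule K (Fin (n+1) → K), Module.finrank K W = h + 1 ∧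
      ∃ S : Finset (Fin (s+3)), S.card = h + 2 ∧ ∀ i ∈ S, (P i).rep ∈ W}) :
    k ≤ s - 1 ∧ ∀ h, k ≤ h → h ≤ s - 1 →
      ∀ W : Submodule K (Fin (n+1) → K), Module.finrank K W = h + 1 →
        ∀ S : Finset (Fin (s+3)), (∀ i ∈ S, (P i).rep ∈ W) → S.card ≤ h + 2 := by
  classical
  push_neg at hngp
  obtain ⟨j, hj, W, hW, S, hSW, hScard⟩ := hngp
  obtain ⟨S', hS'sub, hS'card⟩ := Finset.exists_subset_card_eq (n := j + 2) (by omega : j + 2 ≤ S.card)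
  have hkle : k ≤ j := by
    rw [hk]
    exact Nat.sInf_le ⟨W, hW, S', hS'card, fun i hi => hSW i (hS'sub hi)⟩
  constructor
  · omega
  · intro h _ hhs W hW S hSW
    by_contra hc
    push_neg at hc
    obtain ⟨S', hS'sub, hS'card⟩ :=
      Finset.exists_subset_card_eq (n := h + 3) (by omega : h + 3 ≤ S.card)
    have hTcard : s - 1 - h ≤ S'ᶜ.card := by
      rw [Finset.card_compl, hS'card]
      simp only [Fintype.card_fin]
      omega
    obtain ⟨T, hTsub, hTc⟩ := Finset.exists_subset_card_eq hTcard
    set U1 : Submodule K (Fin (n+1) → K) :=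
      Submodule.span K ((S'.image fun i => (P i).rep : Finset _) : Set (Fin (n+1) → K)) with hU1
    set U2 : Submodule K (Fin (n+1) → K) :=
      Submodule.span K ((T.image fun i => (P i).rep : Finset _) : Set (Fin (n+1) → K)) with hU2
    have hU1W : U1 ≤ W := by
      rw [hU1, Submodule.span_le]
      intro x hx
      simp only [Finset.coe_image, Set.mem_image, Finset.mem_coe] at hx
      obtain ⟨i, hi, rfl⟩ := hx
      exact hSW i (hS'sub hi)
    have hU1f : Module.finrank K U1 ≤ h + 1 := hW ▸ Submodule.finrank_mono hU1W
    have hU2f : Module.finrank K U2 ≤ s - 1 - h :=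
      le_trans (finrank_span_finset_le_card _) (hTc ▸ Finset.card_image_le)
    have hUγ : U1 ⊔ U2 ≤ γ := by
      apply sup_le <;>
      · rw [Submodule.span_le]
        intro x hx
        simp only [Finset.coe_image, Set.mem_image, Finset.mem_coe] at hx
        obtain ⟨i, _, rfl⟩ := hx
        exact hPγ i
    have hUf : Module.finrank K (U1 ⊔ U2 : Submodule K (Fin (n+1) → K)) ≤ s :=
      le_trans (Submodule.finrank_add_le_finrank_add_finrank U1 U2) (by omega)
    obtain ⟨Wf, hWf1, hWf2, hWf3⟩ := aux_extend γ (U1 ⊔ U2) hUγ s hUf (by omega)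
    have hmem : ∀ i ∈ S' ∪ T, (P i).rep ∈ Wf := by
      intro i hi
      rcases Finset.mem_union.mp hi with hi | hi
      · exact hWf1 (le_sup_left (a := U1) (Submodule.subset_span
          (Finset.mem_coe.mpr (Finset.mem_image_of_mem _ hi))))
      · exact hWf1 (le_sup_right (b := U2) (Submodule.subset_span
          (Finset.mem_coe.mpr (Finset.mem_image_of_mem _ hi))))
    have hdisj : Disjoint S' T := Finset.disjoint_left.mpr
      (fun i hi hiT => (Finset.mem_compl.mp (hTsub hiT)) hi)
    have hcard : (S' ∪ T).card = s + 2 := by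
      rw [Finset.card_union_of_disjoint hdisj, hS'card, hTc]; omega
    have := h1 Wf hWf3 (S' ∪ T) hmem
    omega
end
end

section
/- Let P_1,...,P_5 be distinct points in ℙ^n with P_3, P_4, P_5 collinear on a line β and P_1, P_2 ∉ β, and the 5 points not all on a line. Let m be a positive integer and J = ℘_1^m ∩ ... ∩ ℘_4^m. Suppose Q_1 is a hyperplane through P_1, P_3 avoiding P_5 and Q_2 is a hyperplane through P_2, P_4 avoiding P_5. Then Q_1^m Q_2^m M ∈ J for every monomial M in X_1,...,X_n of degree i ≤ m-1, and consequently reg(R/(J + ℘_5^m)) ≤ 3m - 1. -/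
open MvPolynomial

noncomputable section

variable (K : Type*) [Field K] [IsAlgClosed K]
set_option linter.unusedSectionVars false

private lemma degAdd {σ : Type*} (f g : σ →₀ ℕ) :
    (f + g).degree = f.degree + g.degree := by
  simp only [Finsupp.degree_eq_weight_one, map_add]

private lemma degSingle {σ : Type*} (i : σ) (a : ℕ) : (Finsupp.single i a).degree = a := by
  simp only [Finsupp.degree_eq_weight_one, Finsupp.weight_apply]
  simp [Finsupp.sum_single_index]

private lemma eraseSelf {σ : Type*} [DecidableEq σ] (i : σ) (f : σ →₀ ℕ) (h : f i = 0) :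
    f.erase i = f := by
  ext j
  rcases eq_or_ne j i with rfl | hj
  · rw [Finsupp.erase_same, h]
  · rw [Finsupp.erase_ne hj]

private lemma mem_of_forall_mon {n : ℕ} {I : Ideal (MvPolynomial (Fin (n+1)) K)}
    {p : MvPolynomial (Fin (n+1)) K}
    (h : ∀ u ∈ p.support, monomial u (1:K) ∈ I) : p ∈ I := by
  rw [p.as_sum]
  refine Ideal.sum_mem _ fun u hu => ?_
  rw [← mul_one (coeff u p), ← C_mul_monomial]
  exact Ideal.mul_mem_left _ _ (h u hu)

private lemma mon_mem_pow {n : ℕ} (t : ℕ) :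
    ∀ d : Fin (n+1) →₀ ℕ, d 0 = 0 → t ≤ d.degree →
      monomial d (1:K) ∈
        (Ideal.span ((X) '' {j : Fin (n+1) | j ≠ 0}) : Ideal (MvPolynomial (Fin (n+1)) K)) ^ t := by
  induction t with
  | zero => intro d _ _; simp [Ideal.one_eq_top]
  | succ t IH =>
    intro d hd0 hdeg
    have hdne : d ≠ 0 := by
      intro h
      rw [h, map_zero] at hdeg
      omega
    obtain ⟨j, hj⟩ := Finsupp.ne_iff.mp hdne
    simp only [Finsupp.coe_zero, Pi.zero_apply] at hj
    have hj0 : j ≠ 0 := by rintro rfl; exact hj hd0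
    have hle : Finsupp.single j 1 ≤ d := Finsupp.single_le_iff.mpr (by omega)
    set d' := d - Finsupp.single j 1 with hd'
    have hsum : Finsupp.single j 1 + d' = d := add_tsub_cancel_of_le hle
    have hd'0 : d' 0 = 0 := by
      rw [hd']
      simp [Finsupp.coe_tsub, hd0]
    have hd'deg : t ≤ d'.degree := by
      have := degAdd (Finsupp.single j 1) d'
      rw [hsum, degSingle] at this
      omega
    have hd2 : d = d' + Finsupp.single j 1 := ((add_comm d' _).trans hsum).symm
    have hmon : monomial d (1:K) = monomial d' 1 * X j := by
      rw [X, monomial_mul, mul_one, ← hd2]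
    rw [hmon, pow_succ]
    exact Ideal.mul_mem_mul (IH d' hd'0 hd'deg)
      (Ideal.subset_span ⟨j, hj0, rfl⟩)

private lemma lin_decomp {n : ℕ} {p : MvPolynomial (Fin (n+1)) K} (hp : p.IsHomogeneous 1) :
    p - C (coeff (Finsupp.single 0 1) p) * X 0 ∈
      (Ideal.span ((X) '' {j : Fin (n+1) | j ≠ 0}) : Ideal (MvPolynomial (Fin (n+1)) K)) := by
  rw [mem_ideal_span_X_image]
  intro u hu
  by_contra hco
  push_neg at hco
  have hco' : ∀ i : Fin (n+1), i ≠ 0 → u i = 0 := fun i hi => hco i hi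
  have hu0 : u = Finsupp.single 0 (u 0) := by
    ext j
    rcases eq_or_ne j 0 with rfl | hj
    · simp
    · rw [hco' j hj, Finsupp.single_eq_of_ne' (Ne.symm hj)]
  have hcoeff := mem_support_iff.mp hu
  rw [coeff_sub, coeff_C_mul, coeff_X'] at hcoeff
  rcases eq_or_ne u (Finsupp.single 0 1) with heq | hne
  · rw [if_pos heq.symm, heq] at hcoeff
    simp at hcoeff
  · rw [if_neg (fun h => hne h.symm), mul_zero, sub_zero] at hcoeff
    have hdeg : u.degree = 1 := by
      rw [Finsupp.degree_eq_weight_one]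
      exact hp hcoeff
    rw [hu0, degSingle] at hdeg
    exact hne (by rw [hu0, hdeg])

/-- The s = 2 case in Case 2.2.2 of Proposition 3.3. -/
theorem stmt16 {n : ℕ} (hn : 1 ≤ n)
    (P : Fin 5 → Projectivization K (Fin (n+1) → K)) (hP : Function.Injective P)
    (e₀ : Fin (n+1) → K) (he₀ : e₀ = fun j => if j = 0 then 1 else 0)
    (h0 : e₀ ≠ 0) (hP5 : P 4 = Projectivization.mk K e₀ h0)
    (hβ : ∃ β : Submodule K (Fin (n+1) → K), Module.finrank K β = 2 ∧
      (P 2).rep ∈ β ∧ (P 3).rep ∈ β ∧ (P 4).rep ∈ β ∧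
      (P 0).rep ∉ β ∧ (P 1).rep ∉ β)
    (hnl : ¬ ∃ W : Submodule K (Fin (n+1) → K), Module.finrank K W = 2 ∧
      ∀ i, (P i).rep ∈ W)
    (m : ℕ) (hm : 1 ≤ m)
    (J : Ideal (MvPolynomial (Fin (n+1)) K))
    (hJ : J = ⨅ i : {i : Fin 5 // (i : ℕ) < 4}, (pointIdeal K (P i)) ^ m)
    (Q₁ Q₂ : MvPolynomial (Fin (n+1)) K)
    (hQ₁ : Q₁.IsHomogeneous 1 ∧ eval (P 0).rep Q₁ = 0 ∧ eval (P 2).rep Q₁ = 0 ∧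
      eval (P 4).rep Q₁ ≠ 0)
    (hQ₂ : Q₂.IsHomogeneous 1 ∧ eval (P 1).rep Q₂ = 0 ∧ eval (P 3).rep Q₂ = 0 ∧
      eval (P 4).rep Q₂ ≠ 0) :
    (∀ d : Fin (n+1) →₀ ℕ, d 0 = 0 → (∑ k, d k) ≤ m - 1 →
      Q₁ ^ m * Q₂ ^ m * monomial d 1 ∈ J) ∧
    regIndex K (J + (pointIdeal K (P 4)) ^ m) ≤ 3 * m - 1 := by
  classical
  -- Part 1
  have part1' : ∀ d : Fin (n+1) →₀ ℕ, Q₁ ^ m * Q₂ ^ m * monomial d 1 ∈ J := by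
    intro d
    rw [hJ, Ideal.mem_iInf]
    rintro ⟨i, hi⟩
    have hQ1m0 : Q₁ ∈ pointIdeal K (P 0) := Ideal.subset_span ⟨hQ₁.1, hQ₁.2.1⟩
    have hQ1m2 : Q₁ ∈ pointIdeal K (P 2) := Ideal.subset_span ⟨hQ₁.1, hQ₁.2.2.1⟩
    have hQ2m1 : Q₂ ∈ pointIdeal K (P 1) := Ideal.subset_span ⟨hQ₂.1, hQ₂.2.1⟩
    have hQ2m3 : Q₂ ∈ pointIdeal K (P 3) := Ideal.subset_span ⟨hQ₂.1, hQ₂.2.2.1⟩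
    fin_cases i
    · exact Ideal.mul_mem_right _ _ (Ideal.mul_mem_right _ _ (Ideal.pow_mem_pow hQ1m0 m))
    · exact Ideal.mul_mem_right _ _ (Ideal.mul_mem_left _ _ (Ideal.pow_mem_pow hQ2m1 m))
    · exact Ideal.mul_mem_right _ _ (Ideal.mul_mem_right _ _ (Ideal.pow_mem_pow hQ1m2 m))
    · exact Ideal.mul_mem_right _ _ (Ideal.mul_mem_left _ _ (Ideal.pow_mem_pow hQ2m3 m))
    · exact absurd hi (by norm_num)
  -- representative of P 4
  obtain ⟨c, hc⟩ := Projectivization.exists_smul_eq_mk_rep K e₀ h0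
  have hrep : (P 4).rep = c • e₀ := by rw [hP5, ← hc]
  have hrepj : ∀ j : Fin (n+1), j ≠ 0 → (P 4).rep j = 0 := by
    intro j hj
    rw [hrep, Pi.smul_apply, he₀]
    simp [hj]
  have hrep0 : (P 4).rep 0 = (c : K) := by
    rw [hrep, Pi.smul_apply, he₀]
    simp [Units.smul_def]
  have hsplit : ∀ u : Fin (n+1) →₀ ℕ, u 0 + (u.erase 0).degree = u.degree := by
    intro u
    conv_rhs => rw [← Finsupp.single_add_erase 0 u]
    rw [degAdd, degSingle]
  have hI5le : Ideal.span ((X : Fin (n+1) → MvPolynomial (Fin (n+1)) K) '' {j | j ≠ 0})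
      ≤ pointIdeal K (P 4) := by
    rw [Ideal.span_le]
    rintro _ ⟨j, hj, rfl⟩
    exact Ideal.subset_span ⟨isHomogeneous_X _ _, by rw [eval_X]; exact hrepj j hj⟩
  have hker : Ideal.span ((X : Fin (n+1) → MvPolynomial (Fin (n+1)) K) '' {j | j ≠ 0})
      ≤ RingHom.ker (eval ((P 4).rep)) := by
    rw [Ideal.span_le]
    rintro _ ⟨j, hj, rfl⟩
    rw [SetLike.mem_coe, RingHom.mem_ker, eval_X]
    exact hrepj j hj
  set a : K := coeff (Finsupp.single 0 1) Q₁ with ha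
  set b : K := coeff (Finsupp.single 0 1) Q₂ with hb
  have hL1 : Q₁ - C a * X 0 ∈
      Ideal.span ((X : Fin (n+1) → MvPolynomial (Fin (n+1)) K) '' {j | j ≠ 0}) :=
    lin_decomp K hQ₁.1
  have hL2 : Q₂ - C b * X 0 ∈
      Ideal.span ((X : Fin (n+1) → MvPolynomial (Fin (n+1)) K) '' {j | j ≠ 0}) :=
    lin_decomp K hQ₂.1
  have haz : a ≠ 0 := by
    have h1 := hker hL1
    rw [RingHom.mem_ker, map_sub, map_mul, eval_C, eval_X, hrep0, sub_eq_zero] at h1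
    intro h
    exact hQ₁.2.2.2 (by rw [h1, h, zero_mul])
  have hbz : b ≠ 0 := by
    have h1 := hker hL2
    rw [RingHom.mem_ker, map_sub, map_mul, eval_C, eval_X, hrep0, sub_eq_zero] at h1
    intro h
    exact hQ₂.2.2.2 (by rw [h1, h, zero_mul])
  have hab : a ^ m * b ^ m ≠ 0 := mul_ne_zero (pow_ne_zero _ haz) (pow_ne_zero _ hbz)
  have hpowmem : ∀ x y : MvPolynomial (Fin (n+1)) K,
      x - y ∈ Ideal.span ((X : Fin (n+1) → MvPolynomial (Fin (n+1)) K) '' {j | j ≠ 0}) →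
      x^m - y^m ∈ Ideal.span ((X : Fin (n+1) → MvPolynomial (Fin (n+1)) K) '' {j | j ≠ 0}) := by
    intro x y hxy
    obtain ⟨t, ht⟩ := sub_dvd_pow_sub_pow x y m
    rw [ht]
    exact Ideal.mul_mem_right _ _ hxy
  have hD1 : Q₁^m * Q₂^m - C (a^m*b^m) * X 0^(2*m) ∈
      Ideal.span ((X : Fin (n+1) → MvPolynomial (Fin (n+1)) K) '' {j | j ≠ 0}) := by
    have hX : C (a^m*b^m) * (X 0 : MvPolynomial (Fin (n+1)) K)^(2*m)
        = (C a * X 0)^m * (C b * X 0)^m := by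
      rw [C_mul, C_pow, C_pow]
      ring
    have hcomb : Q₁^m * Q₂^m - C (a^m*b^m) * X 0^(2*m)
        = (Q₁^m - (C a * X 0)^m) * Q₂^m + (C a * X 0)^m * (Q₂^m - (C b * X 0)^m) := by
      rw [hX]; ring
    rw [hcomb]
    exact Ideal.add_mem _ (Ideal.mul_mem_right _ _ (hpowmem _ _ hL1))
      (Ideal.mul_mem_left _ _ (hpowmem _ _ hL2))
  have hq : (Q₁^m * Q₂^m).IsHomogeneous (2*m) := by
    have h := (hQ₁.1.pow m).mul (hQ₂.1.pow m)
    simpa [one_mul, two_mul] using h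
  have hx : (C (a^m*b^m) * (X 0 : MvPolynomial (Fin (n+1)) K)^(2*m)).IsHomogeneous (2*m) :=
    (isHomogeneous_X_pow _ _).C_mul _
  have hD2 : (Q₁^m * Q₂^m - C (a^m*b^m) * X 0^(2*m)).IsHomogeneous (2*m) := hq.sub hx
  have hJle : J ≤ J + pointIdeal K (P 4) ^ m := by
    rw [Submodule.add_eq_sup]; exact le_sup_left
  have hPle : pointIdeal K (P 4) ^ m ≤ J + pointIdeal K (P 4) ^ m := by
    rw [Submodule.add_eq_sup]; exact le_sup_right
  have hp5 : ∀ u : Fin (n+1) →₀ ℕ, m ≤ (u.erase 0).degree →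
      monomial u (1:K) ∈ J + pointIdeal K (P 4) ^ m := by
    intro u hu
    have h1 := mon_mem_pow K m (u.erase 0) Finsupp.erase_same hu
    have h2 : monomial u (1:K) = monomial (Finsupp.single 0 (u 0)) 1 * monomial (u.erase 0) 1 := by
      rw [monomial_mul, mul_one, Finsupp.single_add_erase]
    rw [h2]
    exact hPle (Ideal.mul_mem_left _ _ (Ideal.pow_right_mono hI5le m h1))
  have core : ∀ u : Fin (n+1) →₀ ℕ, u.degree = 3*m - 1 → (u.erase 0).degree ≤ m - 1 →
      (∀ u' : Fin (n+1) →₀ ℕ, u'.degree = 3*m-1 →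
        (u.erase 0).degree + 1 ≤ (u'.erase 0).degree →
        monomial u' (1:K) ∈ J + pointIdeal K (P 4) ^ m) →
      monomial u (1:K) ∈ J + pointIdeal K (P 4) ^ m := by
    intro u hdeg hil HI
    have hu0 : u 0 = (m - 1 - (u.erase 0).degree) + 2*m := by
      have := hsplit u
      omega
    have hmono : monomial (Finsupp.single 0 (m-1-(u.erase 0).degree)) (1:K) * X 0 ^(2*m)
        * monomial (u.erase 0) 1 = monomial u 1 := by
      rw [X_pow_eq_monomial, monomial_mul, monomial_mul, one_mul, one_mul]
      have h5 : Finsupp.single (0 : Fin (n+1)) (m-1-(u.erase 0).degree) + Finsupp.single 0 (2*m)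
          + u.erase 0 = u := by
        rw [← Finsupp.single_add, ← hu0, Finsupp.single_add_erase]
      rw [h5]
    have hEid : monomial (Finsupp.single 0 (m-1-(u.erase 0).degree)) (1:K)
          * (Q₁^m * Q₂^m * monomial (u.erase 0) 1) - C (a^m*b^m) * monomial u 1
        = monomial (Finsupp.single 0 (m-1-(u.erase 0).degree)) 1
          * (Q₁^m * Q₂^m - C (a^m*b^m) * X 0^(2*m)) * monomial (u.erase 0) 1 := by
      rw [← hmono]; ring
    have hEmem : monomial (Finsupp.single 0 (m-1-(u.erase 0).degree)) (1:K)
        * (Q₁^m * Q₂^m - C (a^m*b^m) * X 0^(2*m)) * monomial (u.erase 0) 1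
        ∈ J + pointIdeal K (P 4) ^ m := by
      apply mem_of_forall_mon K
      intro u' hu'
      obtain ⟨v, hv, w, hw, huvw⟩ := Finset.mem_add.mp (support_mul _ _ hu')
      obtain ⟨v0, hv0, v1, hv1, hv01⟩ := Finset.mem_add.mp (support_mul _ _ hv)
      rw [support_monomial, if_neg one_ne_zero, Finset.mem_singleton] at hv0 hw
      subst hv0
      subst hw
      subst hv01
      subst huvw
      have hv1deg : v1.degree = 2*m := by
        rw [Finsupp.degree_eq_weight_one]
        exact hD2 (mem_support_iff.mp hv1)
      obtain ⟨j, hj0, hjne⟩ := mem_ideal_span_X_image.mp hD1 v1 hv1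
      have hj0' : j ≠ 0 := hj0
      have hdeg' : ((Finsupp.single 0 (m-1-(u.erase 0).degree) + v1) + u.erase 0).degree
          = 3*m-1 := by
        rw [degAdd, degAdd, degSingle, hv1deg]
        omega
      have haw : (u.erase 0).degree + 1
          ≤ (((Finsupp.single 0 (m-1-(u.erase 0).degree) + v1) + u.erase 0).erase 0).degree := by
        rw [Finsupp.erase_add, Finsupp.erase_add, Finsupp.erase_single,
          eraseSelf 0 (u.erase 0) Finsupp.erase_same, degAdd, degAdd, map_zero]
        have h1 : (v1.erase 0).degree ≠ 0 := by
          rw [Ne, Finsupp.degree_eq_zero_iff]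
          intro h
          have h2 : (v1.erase 0) j = v1 j := Finsupp.erase_ne hj0'
          rw [h] at h2
          simp only [Finsupp.coe_zero, Pi.zero_apply] at h2
          exact hjne h2.symm
        omega
      exact HI _ hdeg' haw
    have hGmem : monomial (Finsupp.single 0 (m-1-(u.erase 0).degree)) (1:K)
        * (Q₁^m * Q₂^m * monomial (u.erase 0) 1) ∈ J + pointIdeal K (P 4) ^ m :=
      hJle (Ideal.mul_mem_left _ _ (part1' (u.erase 0)))
    have hCmem : C (a^m*b^m) * monomial u (1:K) ∈ J + pointIdeal K (P 4) ^ m := by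
      have h3 : C (a^m*b^m) * monomial u (1:K)
          = (monomial (Finsupp.single 0 (m-1-(u.erase 0).degree)) (1:K)
              * (Q₁^m * Q₂^m * monomial (u.erase 0) 1))
            - (monomial (Finsupp.single 0 (m-1-(u.erase 0).degree)) 1
              * (Q₁^m * Q₂^m - C (a^m*b^m) * X 0^(2*m)) * monomial (u.erase 0) 1) := by
        rw [← hEid]; ring
      rw [h3]
      exact Ideal.sub_mem _ hGmem hEmem
    have h4 : monomial u (1:K) = C ((a^m*b^m)⁻¹) * (C (a^m*b^m) * monomial u 1) := by
      rw [← mul_assoc, ← C_mul, inv_mul_cancel₀ hab, C_1, one_mul]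
    rw [h4]
    exact Ideal.mul_mem_left _ _ hCmem
  have main : ∀ k : ℕ, ∀ u : Fin (n+1) →₀ ℕ, u.degree = 3*m-1 →
      m-1 ≤ (u.erase 0).degree + k →
      monomial u (1:K) ∈ J + pointIdeal K (P 4) ^ m := by
    intro k
    induction k with
    | zero =>
      intro u hdeg hk
      by_cases hbig : m ≤ (u.erase 0).degree
      · exact hp5 u hbig
      · exact core u hdeg (by omega) (fun u' hdeg' haw => hp5 u' (by omega))
    | succ k IH =>
      intro u hdeg hk
      by_cases hbig : m ≤ (u.erase 0).degree
      · exact hp5 u hbig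
      · refine core u hdeg (by omega) (fun u' hdeg' haw => ?_)
        by_cases hbig' : m ≤ (u'.erase 0).degree
        · exact hp5 u' hbig'
        · exact IH u' hdeg' (by omega)
  have allmon : ∀ t : ℕ, 3*m-1 ≤ t → ∀ u : Fin (n+1) →₀ ℕ, u.degree = t →
      monomial u (1:K) ∈ J + pointIdeal K (P 4) ^ m := by
    intro t ht u hu
    by_cases hbig : m ≤ (u.erase 0).degree
    · exact hp5 u hbig
    · have hdecomp := hsplit u
      have hle : t - (3*m-1) ≤ u 0 := by omega
      have h7 : u = Finsupp.single 0 (t - (3*m-1))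
          + (Finsupp.single 0 (u 0 - (t - (3*m-1))) + u.erase 0) := by
        rw [← add_assoc, ← Finsupp.single_add, Nat.add_sub_cancel' hle, Finsupp.single_add_erase]
      have hdeg'' : (Finsupp.single (0 : Fin (n+1)) (u 0 - (t - (3*m-1))) + u.erase 0).degree
          = 3*m-1 := by
        rw [degAdd, degSingle]
        omega
      have h8 := main (m-1) _ hdeg'' (by omega)
      have h9 : monomial u (1:K) = monomial (Finsupp.single 0 (t - (3*m-1))) 1
          * monomial (Finsupp.single 0 (u 0 - (t - (3*m-1))) + u.erase 0) 1 := by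
        rw [monomial_mul, mul_one, ← h7]
      rw [h9]
      exact Ideal.mul_mem_left _ _ h8
  have hilb0 : ∀ t : ℕ, 3*m-1 ≤ t → hilbertFn K (J + pointIdeal K (P 4) ^ m) t = 0 := by
    intro t ht
    have hmap : (homogeneousSubmodule (Fin (n+1)) K t).map
        (Ideal.Quotient.mkₐ K (J + pointIdeal K (P 4) ^ m)).toLinearMap = ⊥ := by
      rw [Submodule.eq_bot_iff]
      rintro x ⟨f, hf, rfl⟩
      have hf' : f.IsHomogeneous t := (mem_homogeneousSubmodule _ _).mp hf
      have hfm : f ∈ J + pointIdeal K (P 4) ^ m := by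
        apply mem_of_forall_mon K
        intro u hu
        refine allmon t ht u ?_
        rw [Finsupp.degree_eq_weight_one]
        exact hf' (mem_support_iff.mp hu)
      simp only [AlgHom.toLinearMap_apply, Ideal.Quotient.mkₐ_eq_mk,
        Ideal.Quotient.eq_zero_iff_mem]
      exact hfm
    unfold hilbertFn
    rw [hmap]
    exact finrank_bot K _
  refine ⟨fun d _ _ => part1' d, ?_⟩
  unfold regIndex
  apply Nat.sInf_le
  simp only [Set.mem_setOf_eq]
  intro s hs
  rw [hilb0 s hs, hilb0 _ le_rfl]
end
end
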